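/- arXiv:2003.10529 — 6 statements merged into one kernel-verified Lean document; each statement's English description precedes it below -/
import Mathlib

section
/- Let E be a finite set and let f : 2^E → ℤ be a function that is submodular (f(S ∪ T) + f(S ∩ T) ≤ f(S) + f(T)), monotone (S ⊆ T implies f(S) ≤ f(T)), and takes nonnegative values on nonempty sets. Then the collection I = {I ⊆ E : I = ∅ or for all nonempty I' ⊆ I, |I'| ≤ f(I')} is the collection of independent sets of a matroid on E. -/
/-- The independence axioms for a (finite) matroid given by its collection of
independent sets: the empty set is independent, independence is closed under
subsets, and the augmentation axiom holds. -/
def IsMatroidIndep {α : Type*} [DecidableEq α] (Ind : Finset α → Prop) : Prop :=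
  Ind ∅ ∧ (∀ ⦃I J : Finset α⦄, Ind J → I ⊆ J → Ind I) ∧
    ∀ ⦃I J : Finset α⦄, Ind I → Ind J → I.card < J.card →
      ∃ e ∈ J, e ∉ I ∧ Ind (insert e I)

/-- Edmonds' independence condition for a set function `f`. -/
def EdmondsIndep {α : Type*} (f : Finset α → ℤ) (I : Finset α) : Prop :=
  I = ∅ ∨ ∀ I' ⊆ I, I'.Nonempty → (I'.card : ℤ) ≤ f I'

/-- Edmonds' construction: a submodular, monotone set function that is
nonnegative on nonempty sets induces a matroid whose independent sets are the
`I` with `|I'| ≤ f I'` for all nonempty `I' ⊆ I`. -/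
theorem edmonds_matroid {E : Type*} [Fintype E] [DecidableEq E] (f : Finset E → ℤ)
    (hsub : ∀ S T : Finset E, f (S ∪ T) + f (S ∩ T) ≤ f S + f T)
    (hmono : ∀ ⦃S T : Finset E⦄, S ⊆ T → f S ≤ f T)
    (hnonneg : ∀ S : Finset E, S.Nonempty → 0 ≤ f S) :
    IsMatroidIndep (EdmondsIndep f) := by
  classical
  have hchar : ∀ K : Finset E,
      EdmondsIndep f K ↔ ∀ I' ⊆ K, I'.Nonempty → (I'.card : ℤ) ≤ f I' := by
    intro K
    constructor
    · rintro (rfl | h) I' hs hne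
      · rw [Finset.subset_empty] at hs
        subst hs
        exact absurd hne (by simp)
      · exact h I' hs hne
    · intro h; exact Or.inr h
  refine ⟨Or.inl rfl, ?_, ?_⟩
  · intro I J hJ hIJ
    rw [hchar] at hJ ⊢
    exact fun I' h h' => hJ I' (h.trans hIJ) h'
  · intro I J hI hJ hcard
    rw [hchar] at hI hJ
    by_contra hcon
    push_neg at hcon
    -- witness extraction
    have hwit : ∀ e ∈ J \ I, ∃ A : Finset E,
        A ⊆ I ∧ A.Nonempty ∧ f (insert e A) ≤ (A.card : ℤ) := by
      intro e he
      rw [Finset.mem_sdiff] at he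
      have hni := hcon e he.1 he.2
      rw [hchar] at hni
      push_neg at hni
      obtain ⟨C, hCsub, hCne, hCf⟩ := hni
      have heC : e ∈ C := by
        by_contra heC
        have hCI : C ⊆ I := by
          intro x hx
          rcases Finset.mem_insert.1 (hCsub hx) with rfl | h
          · exact absurd hx heC
          · exact h
        exact absurd (hI C hCI hCne) (not_le.2 hCf)
      refine ⟨C.erase e, ?_, ?_, ?_⟩
      · intro x hx
        have hx' := Finset.mem_erase.1 hx
        rcases Finset.mem_insert.1 (hCsub hx'.2) with rfl | h
        · exact absurd rfl hx'.1
        · exact h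
      · rcases Finset.eq_empty_or_nonempty (C.erase e) with hemp | hne
        · exfalso
          have hCe : C = {e} := by
            apply Finset.eq_singleton_iff_unique_mem.2
            refine ⟨heC, fun x hx => ?_⟩
            by_contra hxe
            exact (Finset.notMem_empty x) (hemp ▸ Finset.mem_erase.2 ⟨hxe, hx⟩)
          have h1 : (1 : ℤ) ≤ f {e} := by
            have := hJ {e} (Finset.singleton_subset_iff.2 he.1) ⟨e, by simp⟩
            simpa using this
          rw [hCe] at hCf
          simp only [Finset.card_singleton] at hCf
          omega
        · exact hne
      · have hins : insert e (C.erase e) = C := Finset.insert_erase heC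
        rw [hins]
        have hc : C.card = (C.erase e).card + 1 := by
          rw [Finset.card_erase_of_mem heC]
          have : 1 ≤ C.card := Finset.card_pos.2 hCne
          omega
        rw [hc] at hCf
        push_cast at hCf ⊢
        omega
    choose A hA1 hA2 hA3 using hwit
    -- main induction: build a disjoint family of components
    have main : ∀ D₀ : Finset E, D₀ ⊆ J \ I →
        ∃ 𝒱 : Finset (Finset E),
          (∀ V ∈ 𝒱, V ⊆ I ∪ D₀ ∧ (V ∩ (J \ I)).Nonempty ∧ (V ∩ I).Nonempty ∧
            f V ≤ ((V ∩ I).card : ℤ)) ∧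
          (∀ V ∈ 𝒱, ∀ W ∈ 𝒱, V ≠ W → Disjoint V W) ∧
          D₀ ⊆ 𝒱.biUnion id := by
      intro D₀
      induction D₀ using Finset.induction_on with
      | empty => intro _; exact ⟨∅, by simp, by simp, by simp⟩
      | @insert e D₀ he ih =>
        intro hins
        have heJI : e ∈ J \ I := hins (Finset.mem_insert_self e D₀)
        have hD₀ : D₀ ⊆ J \ I := (Finset.insert_subset_iff.1 hins).2
        obtain ⟨𝒱, hP, hdisj, hcov⟩ := ih hD₀
        have heI : e ∉ I := (Finset.mem_sdiff.1 heJI).2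
        set Ae := A e heJI with hAedef
        have hAI : Ae ⊆ I := hA1 e heJI
        have hAne : Ae.Nonempty := hA2 e heJI
        have hAf : f (insert e Ae) ≤ (Ae.card : ℤ) := hA3 e heJI
        have heNot : ∀ V ∈ 𝒱, e ∉ V := by
          intro V hV hxe
          rcases Finset.mem_union.1 ((hP V hV).1 hxe) with h | h
          · exact heI h
          · exact he h
        set 𝒱₁ := 𝒱.filter (fun V => (V ∩ Ae).Nonempty) with h𝒱₁
        set 𝒱₂ := 𝒱.filter (fun V => ¬(V ∩ Ae).Nonempty) with h𝒱₂
        -- merging lemma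
        have merge : ∀ 𝒰 : Finset (Finset E), 𝒰 ⊆ 𝒱₁ →
            f (insert e Ae ∪ 𝒰.biUnion id) ≤
              (((insert e Ae ∪ 𝒰.biUnion id) ∩ I).card : ℤ) := by
          intro 𝒰
          induction 𝒰 using Finset.induction_on with
          | empty =>
            intro _
            have h1 : insert e Ae ∪ (∅ : Finset (Finset E)).biUnion id = insert e Ae := by
              simp
            rw [h1]
            have h2 : insert e Ae ∩ I = Ae := by
              ext x
              simp only [Finset.mem_inter, Finset.mem_insert]
              constructor
              · rintro ⟨rfl | h, hxI⟩
                · exact absurd hxI heI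
                · exact h
              · intro h; exact ⟨Or.inr h, hAI h⟩
            rw [h2]
            exact hAf
          | @insert V 𝒰 hVnot ih' =>
            intro hsub𝒰
            have hVin : V ∈ 𝒱₁ := hsub𝒰 (Finset.mem_insert_self V 𝒰)
            have h𝒰 : 𝒰 ⊆ 𝒱₁ := fun x hx => hsub𝒰 (Finset.mem_insert_of_mem hx)
            have hVmem : V ∈ 𝒱 := (Finset.mem_filter.1 hVin).1
            have hVA : (V ∩ Ae).Nonempty := (Finset.mem_filter.1 hVin).2
            set X := insert e Ae ∪ 𝒰.biUnion id with hXdef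
            have hXV : X ∩ V = Ae ∩ V := by
              ext x
              simp only [hXdef, Finset.mem_inter, Finset.mem_union, Finset.mem_insert,
                Finset.mem_biUnion, id]
              constructor
              · rintro ⟨(rfl | h) | ⟨W', hW', hxW'⟩, h2⟩
                · exact absurd h2 (heNot V hVmem)
                · exact ⟨h, h2⟩
                · exfalso
                  have hW'mem : W' ∈ 𝒱 := (Finset.mem_filter.1 (h𝒰 hW')).1
                  have hWV : W' ≠ V := by
                    rintro rfl
                    exact hVnot hW'
                  exact (Finset.disjoint_left.1 (hdisj W' hW'mem V hVmem hWV)) hxW' h2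
              · rintro ⟨h1, h2⟩; exact ⟨Or.inl (Or.inr h1), h2⟩
            have hU : insert e Ae ∪ (insert V 𝒰).biUnion id = X ∪ V := by
              rw [Finset.biUnion_insert, hXdef]
              ext x
              simp only [Finset.mem_union, Finset.mem_insert, id_eq]
              tauto
            rw [hU]
            have hfsub := hsub X V
            have hAVI : Ae ∩ V ⊆ I := fun x hx => hAI (Finset.mem_inter.1 hx).1
            have hAVne : (Ae ∩ V).Nonempty := by rwa [Finset.inter_comm] at hVA
            have hfi : ((Ae ∩ V).card : ℤ) ≤ f (X ∩ V) := by
              rw [hXV]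
              exact hI (Ae ∩ V) hAVI hAVne
            have hfV : f V ≤ ((V ∩ I).card : ℤ) := (hP V hVmem).2.2.2
            have hfX : f X ≤ ((X ∩ I).card : ℤ) := ih' h𝒰
            have hcard : ((X ∪ V) ∩ I).card + (Ae ∩ V).card
                = (X ∩ I).card + (V ∩ I).card := by
              have h1 : (X ∪ V) ∩ I = (X ∩ I) ∪ (V ∩ I) := by
                ext x
                simp only [Finset.mem_inter, Finset.mem_union]
                tauto
              have h2 : (X ∩ I) ∩ (V ∩ I) = Ae ∩ V := by
                have : (X ∩ I) ∩ (V ∩ I) = (X ∩ V) ∩ I := by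
                  ext x
                  simp only [Finset.mem_inter]
                  tauto
                rw [this, hXV]
                ext x
                simp only [Finset.mem_inter]
                exact ⟨fun h => ⟨h.1.1, h.1.2⟩, fun h => ⟨⟨h.1, h.2⟩, hAI h.1⟩⟩
              rw [h1, ← h2]
              exact Finset.card_union_add_card_inter _ _
            have hcardZ : (((X ∪ V) ∩ I).card : ℤ) + ((Ae ∩ V).card : ℤ)
                = ((X ∩ I).card : ℤ) + ((V ∩ I).card : ℤ) := by exact_mod_cast hcard
            linarith
        -- build the new family
        set W := insert e Ae ∪ 𝒱₁.biUnion id with hWdef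
        have heW : e ∈ W := Finset.mem_union_left _ (Finset.mem_insert_self e Ae)
        refine ⟨insert W 𝒱₂, ?_, ?_, ?_⟩
        · intro V hV
          rcases Finset.mem_insert.1 hV with rfl | hV₂
          · refine ⟨?_, ⟨e, Finset.mem_inter.2 ⟨heW, heJI⟩⟩, ?_, ?_⟩
            · intro x hx
              rcases Finset.mem_union.1 hx with h | h
              · rcases Finset.mem_insert.1 h with rfl | h'
                · exact Finset.mem_union_right _ (Finset.mem_insert_self x D₀)
                · exact Finset.mem_union_left _ (hAI h')
              · obtain ⟨V', hV', hxV'⟩ := Finset.mem_biUnion.1 h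
                have hV'mem : V' ∈ 𝒱 := (Finset.mem_filter.1 hV').1
                rcases Finset.mem_union.1 ((hP V' hV'mem).1 hxV') with h' | h'
                · exact Finset.mem_union_left _ h'
                · exact Finset.mem_union_right _ (Finset.mem_insert_of_mem h')
            · obtain ⟨a, ha⟩ := hAne
              exact ⟨a, Finset.mem_inter.2
                ⟨Finset.mem_union_left _ (Finset.mem_insert_of_mem ha), hAI ha⟩⟩
            · exact merge 𝒱₁ Finset.Subset.rfl
          · have hVmem : V ∈ 𝒱 := (Finset.mem_filter.1 hV₂).1
            obtain ⟨hs, h1, h2, h3⟩ := hP V hVmem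
            exact ⟨hs.trans (Finset.union_subset_union Finset.Subset.rfl
              (Finset.subset_insert e D₀)), h1, h2, h3⟩
        · intro V hV V' hV' hne
          have hWdisj : ∀ V'' ∈ 𝒱₂, Disjoint W V'' := by
            intro V'' hV''
            have hV''mem : V'' ∈ 𝒱 := (Finset.mem_filter.1 hV'').1
            have hV''A : ¬(V'' ∩ Ae).Nonempty := (Finset.mem_filter.1 hV'').2
            rw [Finset.disjoint_left]
            intro x hx hx'
            rcases Finset.mem_union.1 hx with h | h
            · rcases Finset.mem_insert.1 h with rfl | h'
              · exact heNot V'' hV''mem hx'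
              · exact hV''A ⟨x, Finset.mem_inter.2 ⟨hx', h'⟩⟩
            · obtain ⟨V₃, hV₃, hxV₃⟩ := Finset.mem_biUnion.1 h
              have hV₃mem : V₃ ∈ 𝒱 := (Finset.mem_filter.1 hV₃).1
              have hV₃A : (V₃ ∩ Ae).Nonempty := (Finset.mem_filter.1 hV₃).2
              have hne3 : V₃ ≠ V'' := by
                rintro rfl
                exact hV''A hV₃A
              exact (Finset.disjoint_left.1 (hdisj V₃ hV₃mem V'' hV''mem hne3)) hxV₃ hx'
          rcases Finset.mem_insert.1 hV with rfl | hVm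
          · rcases Finset.mem_insert.1 hV' with rfl | hV'm
            · exact absurd rfl hne
            · exact hWdisj V' hV'm
          · rcases Finset.mem_insert.1 hV' with rfl | hV'm
            · exact (hWdisj V hVm).symm
            · exact hdisj V (Finset.mem_filter.1 hVm).1 V' (Finset.mem_filter.1 hV'm).1 hne
        · intro x hx
          rcases Finset.mem_insert.1 hx with rfl | hxD₀
          · exact Finset.mem_biUnion.2 ⟨W, Finset.mem_insert_self W 𝒱₂, heW⟩
          · obtain ⟨V, hV, hxV⟩ := Finset.mem_biUnion.1 (hcov hxD₀)
            by_cases hcase : (V ∩ Ae).Nonempty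
            · refine Finset.mem_biUnion.2 ⟨W, Finset.mem_insert_self W 𝒱₂, ?_⟩
              exact Finset.mem_union_right _
                (Finset.mem_biUnion.2 ⟨V, Finset.mem_filter.2 ⟨hV, hcase⟩, hxV⟩)
            · exact Finset.mem_biUnion.2
                ⟨V, Finset.mem_insert_of_mem (Finset.mem_filter.2 ⟨hV, hcase⟩), hxV⟩
    -- apply with D₀ = J \ I and count
    obtain ⟨𝒱, hP, hdisj, hcov⟩ := main (J \ I) Finset.Subset.rfl
    set U := 𝒱.biUnion id with hUdef
    have hsum1 : ∀ V ∈ 𝒱, ((V ∩ J).card : ℤ) ≤ ((V ∩ I).card : ℤ) := by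
      intro V hV
      have h1 : (V ∩ (J \ I)).Nonempty := (hP V hV).2.1
      have h2 : (V ∩ J).Nonempty := by
        obtain ⟨a, ha⟩ := h1
        have := Finset.mem_inter.1 ha
        exact ⟨a, Finset.mem_inter.2 ⟨this.1, (Finset.mem_sdiff.1 this.2).1⟩⟩
      have h3 : ((V ∩ J).card : ℤ) ≤ f (V ∩ J) :=
        hJ (V ∩ J) (Finset.inter_subset_right) h2
      have h4 : f (V ∩ J) ≤ f V := hmono (Finset.inter_subset_left)
      have h5 : f V ≤ ((V ∩ I).card : ℤ) := (hP V hV).2.2.2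
      linarith
    have hsumIneq : (∑ V ∈ 𝒱, (V ∩ J).card : ℤ) ≤ (∑ V ∈ 𝒱, (V ∩ I).card : ℤ) := by
      push_cast
      exact Finset.sum_le_sum hsum1
    have hsumN : (∑ V ∈ 𝒱, (V ∩ J).card) ≤ ∑ V ∈ 𝒱, (V ∩ I).card := by
      exact_mod_cast hsumIneq
    have hdJ : ∀ V ∈ 𝒱, ∀ V' ∈ 𝒱, V ≠ V' → Disjoint (V ∩ J) (V' ∩ J) := by
      intro V hV V' hV' hne
      exact Finset.disjoint_of_subset_left Finset.inter_subset_left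
        (Finset.disjoint_of_subset_right Finset.inter_subset_left (hdisj V hV V' hV' hne))
    have hdI : ∀ V ∈ 𝒱, ∀ V' ∈ 𝒱, V ≠ V' → Disjoint (V ∩ I) (V' ∩ I) := by
      intro V hV V' hV' hne
      exact Finset.disjoint_of_subset_left Finset.inter_subset_left
        (Finset.disjoint_of_subset_right Finset.inter_subset_left (hdisj V hV V' hV' hne))
    have hUJ : (U ∩ J).card = ∑ V ∈ 𝒱, (V ∩ J).card := by
      have : U ∩ J = 𝒱.biUnion (fun V => V ∩ J) := by
        ext x
        simp only [hUdef, Finset.mem_inter, Finset.mem_biUnion, id]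
        tauto
      rw [this]
      exact Finset.card_biUnion hdJ
    have hUI : (U ∩ I).card = ∑ V ∈ 𝒱, (V ∩ I).card := by
      have : U ∩ I = 𝒱.biUnion (fun V => V ∩ I) := by
        ext x
        simp only [hUdef, Finset.mem_inter, Finset.mem_biUnion, id]
        tauto
      rw [this]
      exact Finset.card_biUnion hdI
    have hkey : (U ∩ J).card ≤ (U ∩ I).card := by rw [hUJ, hUI]; exact hsumN
    -- counting contradiction
    have h5 : (J \ I).card + (U ∩ I ∩ J).card ≤ (U ∩ J).card := by
      have hsubU : (J \ I) ∪ (U ∩ I ∩ J) ⊆ U ∩ J := by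
        intro x hx
        rcases Finset.mem_union.1 hx with h | h
        · exact Finset.mem_inter.2 ⟨hcov h, (Finset.mem_sdiff.1 h).1⟩
        · have := Finset.mem_inter.1 h
          exact Finset.mem_inter.2 ⟨(Finset.mem_inter.1 this.1).1, this.2⟩
      have hd : Disjoint (J \ I) (U ∩ I ∩ J) := by
        rw [Finset.disjoint_left]
        intro x hx hx'
        exact (Finset.mem_sdiff.1 hx).2 (Finset.mem_inter.1 (Finset.mem_inter.1 hx').1).2
      calc (J \ I).card + (U ∩ I ∩ J).card
          = ((J \ I) ∪ (U ∩ I ∩ J)).card := (Finset.card_union_of_disjoint hd).symm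
        _ ≤ (U ∩ J).card := Finset.card_le_card hsubU
    have h6 : (U ∩ I).card ≤ (U ∩ I ∩ J).card + (I \ J).card := by
      have hsub' : U ∩ I ⊆ (U ∩ I ∩ J) ∪ (I \ J) := by
        intro x hx
        by_cases hxJ : x ∈ J
        · exact Finset.mem_union_left _ (Finset.mem_inter.2 ⟨hx, hxJ⟩)
        · exact Finset.mem_union_right _
            (Finset.mem_sdiff.2 ⟨(Finset.mem_inter.1 hx).2, hxJ⟩)
      calc (U ∩ I).card ≤ ((U ∩ I ∩ J) ∪ (I \ J)).card := Finset.card_le_card hsub'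
        _ ≤ (U ∩ I ∩ J).card + (I \ J).card := Finset.card_union_le _ _
    have h7 : (I \ J).card < (J \ I).card := by
      have a := Finset.card_sdiff_add_card_inter I J
      have b := Finset.card_sdiff_add_card_inter J I
      rw [Finset.inter_comm] at b
      omega
    omega
end

section
/- Let M₁, ..., M_k be matroids on a common finite ground set E with rank functions r₁, ..., r_k. Then a set I ⊆ E is independent in the matroid union M₁ ∨ ⋯ ∨ M_k if and only if for every nonempty subset I' ⊆ I, |I'| ≤ r₁(I') + ⋯ + r_k(I'). -/
/-- The rank of a set `S` in the matroid with independent sets `Ind`: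
the largest cardinality of an independent subset of `S`. -/
noncomputable def matroidRank {α : Type*} (Ind : Finset α → Prop) (S : Finset α) : ℕ :=
  sSup {n | ∃ I ⊆ S, Ind I ∧ I.card = n}

set_option linter.unusedSectionVars false
namespace MUnion
section Rank
variable {α : Type*} [DecidableEq α] {Ind : Finset α → Prop}

lemma rankSet_bdd (S : Finset α) : BddAbove {n | ∃ I ⊆ S, Ind I ∧ I.card = n} := by
  refine ⟨S.card, fun n hn => ?_⟩
  obtain ⟨J, hJS, _, hc⟩ := hn
  exact hc ▸ Finset.card_le_card hJS

lemma rankSet_nonempty (hM : IsMatroidIndep Ind) (S : Finset α) :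
    Set.Nonempty {n | ∃ I ⊆ S, Ind I ∧ I.card = n} :=
  ⟨0, ∅, Finset.empty_subset S, hM.1, Finset.card_empty⟩

lemma card_le_rank {J S : Finset α} (hJ : Ind J) (hJS : J ⊆ S) :
    J.card ≤ matroidRank Ind S :=
  le_csSup (rankSet_bdd S) ⟨J, hJS, hJ, rfl⟩

lemma rank_le_card (hM : IsMatroidIndep Ind) (S : Finset α) :
    matroidRank Ind S ≤ S.card := by
  refine csSup_le (rankSet_nonempty hM S) fun n hn => ?_
  obtain ⟨J, hJS, _, hc⟩ := hn
  exact hc ▸ Finset.card_le_card hJS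

lemma exists_basis (hM : IsMatroidIndep Ind) (S : Finset α) :
    ∃ J, J ⊆ S ∧ Ind J ∧ J.card = matroidRank Ind S := by
  have := Nat.sSup_mem (rankSet_nonempty hM S) (rankSet_bdd S)
  obtain ⟨J, hJS, hind, hc⟩ := this
  exact ⟨J, hJS, hind, hc⟩

lemma rank_mono (hM : IsMatroidIndep Ind) {S T : Finset α} (hST : S ⊆ T) :
    matroidRank Ind S ≤ matroidRank Ind T := by
  refine csSup_le (rankSet_nonempty hM S) fun n hn => ?_
  obtain ⟨J, hJS, hind, hc⟩ := hn
  exact le_csSup (rankSet_bdd T) ⟨J, hJS.trans hST, hind, hc⟩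

lemma indep_of_rank_eq_card (hM : IsMatroidIndep Ind) {S : Finset α}
    (h : matroidRank Ind S = S.card) : Ind S := by
  obtain ⟨J, hJS, hind, hc⟩ := exists_basis hM S
  have : J = S := Finset.eq_of_subset_of_card_le hJS (by omega)
  exact this ▸ hind

lemma exists_basis_superset (hM : IsMatroidIndep Ind) {J T : Finset α}
    (hJ : Ind J) (hJT : J ⊆ T) :
    ∃ J', J ⊆ J' ∧ J' ⊆ T ∧ Ind J' ∧ J'.card = matroidRank Ind T := by
  have key : ∀ n (J : Finset α), Ind J → J ⊆ T → matroidRank Ind T - J.card ≤ n →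
      ∃ J', J ⊆ J' ∧ J' ⊆ T ∧ Ind J' ∧ J'.card = matroidRank Ind T := by
    intro n
    induction n with
    | zero =>
      intro J hJ hJT hn
      have h1 : J.card ≤ matroidRank Ind T := card_le_rank hJ hJT
      exact ⟨J, Finset.Subset.rfl, hJT, hJ, by omega⟩
    | succ n IH =>
      intro J hJ hJT hn
      by_cases hc : J.card = matroidRank Ind T
      · exact ⟨J, Finset.Subset.rfl, hJT, hJ, hc⟩
      · have h1 : J.card < matroidRank Ind T :=
          lt_of_le_of_ne (card_le_rank hJ hJT) hc
        obtain ⟨B, hBT, hBind, hBc⟩ := exists_basis hM T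
        obtain ⟨e, heB, heJ, hins⟩ := hM.2.2 hJ hBind (by omega)
        have hsub : insert e J ⊆ T := Finset.insert_subset (hBT heB) hJT
        have hcard : (insert e J).card = J.card + 1 := Finset.card_insert_of_notMem heJ
        obtain ⟨J', h1', h2', h3', h4'⟩ := IH (insert e J) hins hsub (by omega)
        exact ⟨J', (Finset.subset_insert e J).trans h1', h2', h3', h4'⟩
  exact key (matroidRank Ind T) J hJ hJT (Nat.sub_le _ _)

lemma rank_submodular (hM : IsMatroidIndep Ind) (X Y : Finset α) :
    matroidRank Ind (X ∪ Y) + matroidRank Ind (X ∩ Y) ≤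
      matroidRank Ind X + matroidRank Ind Y := by
  obtain ⟨J, hJsub, hJind, hJcard⟩ := exists_basis hM (X ∩ Y)
  obtain ⟨J', hJJ', hJ'sub, hJ'ind, hJ'card⟩ :=
    exists_basis_superset hM hJind (hJsub.trans Finset.inter_subset_union)
  have e1 : (J' ∩ X) ∪ (J' ∩ Y) = J' ∩ (X ∪ Y) := (Finset.inter_union_distrib_left _ _ _).symm
  have e2 : (J' ∩ X) ∩ (J' ∩ Y) = J' ∩ (X ∩ Y) := by
    ext a; simp [Finset.mem_inter]; tauto
  have h1 : (J' ∩ X).card + (J' ∩ Y).card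
      = (J' ∩ (X ∪ Y)).card + (J' ∩ (X ∩ Y)).card := by
    rw [← e1, ← e2, Finset.card_union_add_card_inter]
  have h2 : J' ∩ (X ∪ Y) = J' := Finset.inter_eq_left.mpr hJ'sub
  have h3 : J ⊆ J' ∩ (X ∩ Y) := Finset.subset_inter hJJ' hJsub
  have h4 : J.card ≤ (J' ∩ (X ∩ Y)).card := Finset.card_le_card h3
  have h5 : (J' ∩ X).card ≤ matroidRank Ind X :=
    card_le_rank (hM.2.1 hJ'ind (Finset.inter_subset_left)) (Finset.inter_subset_right)
  have h6 : (J' ∩ Y).card ≤ matroidRank Ind Y :=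
    card_le_rank (hM.2.1 hJ'ind (Finset.inter_subset_left)) (Finset.inter_subset_right)
  have h7 : (J' ∩ (X ∪ Y)).card = J'.card := by rw [h2]
  omega

end Rank
end MUnion
namespace MUnion

lemma rado {E : Type*} [Fintype E] [DecidableEq E] {k : ℕ}
    (Ind : Fin k → (Finset E → Prop)) (hM : ∀ i, IsMatroidIndep (Ind i)) :
    ∀ (n : ℕ) (I : Finset E) (A : E → Finset (Fin k)),
      (∑ e ∈ I, (A e).card = n) →
      (∀ P ⊆ I, P.card ≤ ∑ i, matroidRank (Ind i) (P.filter (fun e => i ∈ A e))) →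
      ∃ Is : Fin k → Finset E, (∀ i, Ind i (Is i)) ∧ I = Finset.univ.biUnion Is := by
  intro n
  induction n using Nat.strong_induction_on with
  | _ n IH =>
  intro I A hn hC
  by_cases hbig : ∃ e ∈ I, 1 < (A e).card
  · obtain ⟨e, heI, hcard⟩ := hbig
    obtain ⟨x, hx, y, hy, hxy⟩ := Finset.one_lt_card.mp hcard
    set Ax : E → Finset (Fin k) := fun f => if f = e then A e \ {x} else A f with hAx
    set Ay : E → Finset (Fin k) := fun f => if f = e then A e \ {y} else A f with hAy
    have hsubA : ∀ (z : Fin k) (f : E), (if f = e then A e \ {z} else A f) ⊆ A f := by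
      intro z f
      split
      · next h => subst h; exact Finset.sdiff_subset
      · exact Finset.Subset.rfl
    have hmeas : ∀ z ∈ A e, ∑ f ∈ I, ((fun f => if f = e then A e \ {z} else A f) f).card < n := by
      intro z hz
      rw [← hn]
      apply Finset.sum_lt_sum
      · intro f _; exact Finset.card_le_card (hsubA z f)
      · refine ⟨e, heI, ?_⟩
        have hgoal : ((fun f => if f = e then A e \ {z} else A f) e) = A e \ {z} := by simp
        rw [hgoal]
        have : (A e \ {z}).card = (A e).card - 1 := by
          rw [Finset.card_sdiff_of_subset (Finset.singleton_subset_iff.mpr hz), Finset.card_singleton]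
        omega
    by_cases hCx : ∀ P ⊆ I, P.card ≤ ∑ i, matroidRank (Ind i) (P.filter (fun f => i ∈ Ax f))
    · exact IH _ (hmeas x hx) I Ax rfl hCx
    by_cases hCy : ∀ P ⊆ I, P.card ≤ ∑ i, matroidRank (Ind i) (P.filter (fun f => i ∈ Ay f))
    · exact IH _ (hmeas y hy) I Ay rfl hCy
    -- both fail: derive a contradiction
    exfalso
    push_neg at hCx hCy
    obtain ⟨P, hPI, hPbad⟩ := hCx
    obtain ⟨Q, hQI, hQbad⟩ := hCy
    -- the bad sets must contain e
    have hmem : ∀ (z : Fin k) (R : Finset E), R ⊆ I →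
        (∑ i, matroidRank (Ind i) (R.filter (fun f => i ∈ (if f = e then A e \ {z} else A f))) < R.card) →
        e ∈ R := by
      intro z R hRI hbad
      by_contra heR
      have : ∀ i : Fin k, R.filter (fun f => i ∈ (if f = e then A e \ {z} else A f))
          = R.filter (fun f => i ∈ A f) := by
        intro i
        apply Finset.filter_congr
        intro f hf
        have hfe : f ≠ e := fun h => heR (h ▸ hf)
        simp [hfe]
      have h2 : ∀ i : Fin k, matroidRank (Ind i)
          (R.filter (fun f => i ∈ (if f = e then A e \ {z} else A f)))
          = matroidRank (Ind i) (R.filter (fun f => i ∈ A f)) := fun i => by rw [this i]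
      rw [Finset.sum_congr rfl (fun i (_ : i ∈ (Finset.univ : Finset (Fin k))) => h2 i)] at hbad
      exact absurd (hC R hRI) (by omega)
    have heP : e ∈ P := hmem x P hPI hPbad
    have heQ : e ∈ Q := hmem y Q hQI hQbad
    -- key pointwise submodularity inequality
    have key : ∀ i : Fin k,
        matroidRank (Ind i) ((P ∪ Q).filter (fun f => i ∈ A f)) +
        matroidRank (Ind i) (((P ∩ Q).erase e).filter (fun f => i ∈ A f)) ≤
        matroidRank (Ind i) (P.filter (fun f => i ∈ Ax f)) +
        matroidRank (Ind i) (Q.filter (fun f => i ∈ Ay f)) := by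
      intro i
      set X := P.filter (fun f => i ∈ Ax f) with hX
      set Y := Q.filter (fun f => i ∈ Ay f) with hY
      have h1 : (P ∪ Q).filter (fun f => i ∈ A f) ⊆ X ∪ Y := by
        intro f hf
        rw [Finset.mem_filter, Finset.mem_union] at hf
        obtain ⟨hfPQ, hiA⟩ := hf
        rw [Finset.mem_union, hX, hY, Finset.mem_filter, Finset.mem_filter]
        by_cases hfe : f = e
        · subst hfe
          rcases Decidable.eq_or_ne i x with hix | hix
          · right
            refine ⟨heQ, ?_⟩
            simp only [Ay, if_pos rfl, Finset.mem_sdiff, Finset.mem_singleton]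
            exact ⟨hiA, hix ▸ hxy⟩
          · left
            refine ⟨heP, ?_⟩
            simp only [Ax, if_pos rfl, Finset.mem_sdiff, Finset.mem_singleton]
            exact ⟨hiA, hix⟩
        · have hax : i ∈ Ax f := by simp [Ax, hfe, hiA]
          have hay : i ∈ Ay f := by simp [Ay, hfe, hiA]
          rcases hfPQ with h | h
          · exact Or.inl ⟨h, hax⟩
          · exact Or.inr ⟨h, hay⟩
      have h2 : ((P ∩ Q).erase e).filter (fun f => i ∈ A f) ⊆ X ∩ Y := by
        intro f hf
        rw [Finset.mem_filter, Finset.mem_erase, Finset.mem_inter] at hf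
        obtain ⟨⟨hfe, hfP, hfQ⟩, hiA⟩ := hf
        rw [Finset.mem_inter, hX, hY, Finset.mem_filter, Finset.mem_filter]
        have hax : i ∈ Ax f := by simp [Ax, hfe, hiA]
        have hay : i ∈ Ay f := by simp [Ay, hfe, hiA]
        exact ⟨⟨hfP, hax⟩, ⟨hfQ, hay⟩⟩
      calc matroidRank (Ind i) ((P ∪ Q).filter (fun f => i ∈ A f)) +
            matroidRank (Ind i) (((P ∩ Q).erase e).filter (fun f => i ∈ A f))
          ≤ matroidRank (Ind i) (X ∪ Y) + matroidRank (Ind i) (X ∩ Y) :=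
            Nat.add_le_add (rank_mono (hM i) h1) (rank_mono (hM i) h2)
        _ ≤ matroidRank (Ind i) X + matroidRank (Ind i) Y := rank_submodular (hM i) X Y
    have hsumkey := Finset.sum_le_sum (fun i (_ : i ∈ (Finset.univ : Finset (Fin k))) => key i)
    rw [Finset.sum_add_distrib, Finset.sum_add_distrib] at hsumkey
    have hPQ1 := hC (P ∪ Q) (Finset.union_subset hPI hQI)
    have hPQ2 := hC ((P ∩ Q).erase e)
      ((Finset.erase_subset _ _).trans ((Finset.inter_subset_left).trans hPI))
    have hcu : (P ∪ Q).card + (P ∩ Q).card = P.card + Q.card :=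
      Finset.card_union_add_card_inter P Q
    have hce : ((P ∩ Q).erase e).card = (P ∩ Q).card - 1 :=
      Finset.card_erase_of_mem (Finset.mem_inter.mpr ⟨heP, heQ⟩)
    have hpos : 0 < (P ∩ Q).card :=
      Finset.card_pos.mpr ⟨e, Finset.mem_inter.mpr ⟨heP, heQ⟩⟩
    omega
  · push_neg at hbig
    have hone : ∀ f ∈ I, (A f).card = 1 := by
      intro f hf
      have hle := hbig f hf
      rcases Nat.lt_or_ge (A f).card 1 with h | h
      · exfalso
        have hAf : A f = ∅ := Finset.card_eq_zero.mp (by omega)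
        have := hC {f} (Finset.singleton_subset_iff.mpr hf)
        simp only [Finset.card_singleton] at this
        have hz : ∀ i : Fin k, matroidRank (Ind i) (({f} : Finset E).filter (fun e => i ∈ A e)) = 0 := by
          intro i
          have : ({f} : Finset E).filter (fun e => i ∈ A e) = ∅ := by
            apply Finset.filter_eq_empty_iff.mpr
            intro a ha
            rw [Finset.mem_singleton] at ha
            subst ha; simp [hAf]
          rw [this]
          have := rank_le_card (hM i) (∅ : Finset E)
          simpa using this
        rw [Finset.sum_congr rfl (fun i _ => hz i)] at this
        simpa using this
      · omega
    refine ⟨fun i => I.filter (fun f => i ∈ A f), ?_, ?_⟩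
    · -- each piece independent
      have hsum : ∑ i : Fin k, (I.filter (fun f => i ∈ A f)).card = I.card := by
        calc ∑ i : Fin k, (I.filter (fun f => i ∈ A f)).card
            = ∑ i : Fin k, ∑ f ∈ I, (if i ∈ A f then 1 else 0) := by
              refine Finset.sum_congr rfl fun i _ => ?_
              rw [Finset.card_filter]
          _ = ∑ f ∈ I, ∑ i : Fin k, (if i ∈ A f then 1 else 0) := Finset.sum_comm
          _ = ∑ f ∈ I, (A f).card := by
              refine Finset.sum_congr rfl fun f _ => ?_
              rw [Finset.sum_ite_mem, Finset.univ_inter, Finset.sum_const, smul_eq_mul, mul_one]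
          _ = ∑ f ∈ I, 1 := Finset.sum_congr rfl fun f hf => hone f hf
          _ = I.card := by simp
      have hCI := hC I Finset.Subset.rfl
      have hle : ∀ i : Fin k, matroidRank (Ind i) (I.filter (fun f => i ∈ A f))
          ≤ (I.filter (fun f => i ∈ A f)).card := fun i => rank_le_card (hM i) _
      have hsum2 : ∑ i : Fin k, matroidRank (Ind i) (I.filter (fun f => i ∈ A f))
          = ∑ i : Fin k, (I.filter (fun f => i ∈ A f)).card := by
        have h1 := Finset.sum_le_sum (fun i (_ : i ∈ Finset.univ) => hle i)
        omega
      have heach : ∀ i : Fin k, matroidRank (Ind i) (I.filter (fun f => i ∈ A f))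
          = (I.filter (fun f => i ∈ A f)).card := by
        intro i
        have := (Finset.sum_eq_sum_iff_of_le (fun i (_ : i ∈ Finset.univ) => hle i)).mp hsum2
        exact this i (Finset.mem_univ i)
      exact fun i => indep_of_rank_eq_card (hM i) (heach i)
    · ext f
      simp only [Finset.mem_biUnion, Finset.mem_univ, Finset.mem_filter, true_and]
      constructor
      · intro hf
        have : (A f).Nonempty := Finset.card_pos.mp (by rw [hone f hf]; norm_num)
        obtain ⟨i, hi⟩ := this
        exact ⟨i, hf, hi⟩
      · rintro ⟨i, hf, _⟩; exact hf

end MUnion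


/-- a set `I` is independent in the matroid union `M₁ ∨ ⋯ ∨ M_k`
iff `|I'| ≤ r₁(I') + ⋯ + r_k(I')` for every nonempty `I' ⊆ I`. -/
theorem matroid_union_indep_iff {E : Type*} [Fintype E] [DecidableEq E] {k : ℕ}
    (Ind : Fin k → (Finset E → Prop)) (hM : ∀ i, IsMatroidIndep (Ind i)) :
    ∀ I : Finset E,
      (∃ Is : Fin k → Finset E, (∀ i, Ind i (Is i)) ∧ I = Finset.univ.biUnion Is) ↔
        ∀ I' ⊆ I, I'.Nonempty → I'.card ≤ ∑ i, matroidRank (Ind i) I' := by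
  intro I
  constructor
  · rintro ⟨Is, hInd, rfl⟩ I' hI' _
    have hrep : I' = Finset.univ.biUnion (fun i => I' ∩ Is i) := by
      ext f
      simp only [Finset.mem_biUnion, Finset.mem_univ, Finset.mem_inter, true_and]
      constructor
      · intro hf
        obtain ⟨i, _, hi⟩ := Finset.mem_biUnion.mp (hI' hf)
        exact ⟨i, hf, hi⟩
      · rintro ⟨i, hf, _⟩; exact hf
    calc I'.card ≤ ∑ i, (I' ∩ Is i).card := by
          conv_lhs => rw [hrep]
          exact Finset.card_biUnion_le
      _ ≤ ∑ i, matroidRank (Ind i) I' := by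
          refine Finset.sum_le_sum fun i _ => ?_
          exact MUnion.card_le_rank ((hM i).2.1 (hInd i) Finset.inter_subset_right)
            Finset.inter_subset_left
  · intro h
    apply MUnion.rado Ind hM (∑ e ∈ I, (Finset.univ : Finset (Fin k)).card) I
      (fun _ => Finset.univ) rfl
    intro P hP
    have hfe : ∀ i : Fin k, P.filter (fun _ => i ∈ (Finset.univ : Finset (Fin k))) = P :=
      fun i => Finset.filter_true_of_mem fun _ _ => Finset.mem_univ i
    rw [Finset.sum_congr rfl (fun i (_ : i ∈ (Finset.univ : Finset (Fin k))) =>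
      congrArg (matroidRank (Ind i)) (hfe i))]
    rcases P.eq_empty_or_nonempty with rfl | hne
    · simp
    · exact h P hP hne
end

section
/- Let M be a matroid on a finite ground set E with rank function r, and let I ⊆ E satisfy |I'| ≤ 2r(I') − 1 for all nonempty I' ⊆ I. Then I can be written as I = I₁ ∪ I₂ where I₁ and I₂ are independent in M, each spanning I (i.e., r(I₁) = r(I₂) = r(I)), and |I₁ ∩ I₂| ≥ 1. -/
section RankLemmas

variable {α : Type*} [DecidableEq α] {Ind : Finset α → Prop} (hM : IsMatroidIndep Ind)

set_option linter.unusedSectionVars false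

include hM

lemma mx_rank_set_nonempty (S : Finset α) : {n | ∃ I ⊆ S, Ind I ∧ I.card = n}.Nonempty :=
  ⟨0, ∅, Finset.empty_subset S, hM.1, Finset.card_empty⟩

lemma mx_rank_set_bdd (S : Finset α) : BddAbove {n | ∃ I ⊆ S, Ind I ∧ I.card = n} := by
  refine ⟨S.card, fun n hn => ?_⟩
  obtain ⟨J, hJS, _, hc⟩ := hn
  exact hc ▸ Finset.card_le_card hJS

lemma mx_le_rank {J S : Finset α} (hJ : Ind J) (hJS : J ⊆ S) :
    J.card ≤ matroidRank Ind S :=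
  le_csSup (mx_rank_set_bdd hM S) ⟨J, hJS, hJ, rfl⟩

lemma mx_rank_le_card (S : Finset α) : matroidRank Ind S ≤ S.card := by
  refine csSup_le (mx_rank_set_nonempty hM S) (fun n hn => ?_)
  obtain ⟨J, hJS, _, hc⟩ := hn
  exact hc ▸ Finset.card_le_card hJS

lemma mx_exists_basis (S : Finset α) :
    ∃ B ⊆ S, Ind B ∧ B.card = matroidRank Ind S :=
  Nat.sSup_mem (mx_rank_set_nonempty hM S) (mx_rank_set_bdd hM S)

lemma mx_rank_mono {S T : Finset α} (hST : S ⊆ T) : matroidRank Ind S ≤ matroidRank Ind T := by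
  obtain ⟨B, hBS, hBI, hBc⟩ := mx_exists_basis hM S
  exact hBc ▸ mx_le_rank hM hBI (hBS.trans hST)

lemma mx_rank_eq_of_indep {S : Finset α} (hS : Ind S) : matroidRank Ind S = S.card :=
  le_antisymm (mx_rank_le_card hM S) (mx_le_rank hM hS (subset_refl S))

lemma mx_indep_of_rank_eq {S : Finset α} (h : matroidRank Ind S = S.card) : Ind S := by
  obtain ⟨B, hBS, hBI, hBc⟩ := mx_exists_basis hM S
  rwa [Finset.eq_of_subset_of_card_le hBS (by omega) ] at hBI

lemma mx_rank_empty : matroidRank Ind ∅ = 0 :=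
  Nat.le_zero.mp ((mx_rank_le_card hM ∅).trans_eq Finset.card_empty)

lemma mx_rank_insert_le (S : Finset α) (x : α) :
    matroidRank Ind (insert x S) ≤ matroidRank Ind S + 1 := by
  obtain ⟨B, hBS, hBI, hBc⟩ := mx_exists_basis hM (insert x S)
  have h1 : B.erase x ⊆ S := by
    intro a ha
    have := hBS (Finset.mem_of_mem_erase ha)
    rcases Finset.mem_insert.mp this with h | h
    · exact absurd h (Finset.ne_of_mem_erase ha)
    · exact h
  have h2 : Ind (B.erase x) := hM.2.1 hBI (Finset.erase_subset _ _)
  have h3 : B.card - 1 ≤ (B.erase x).card := by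
    rcases Finset.card_erase_le (a := x) (s := B) with _
    by_cases hx : x ∈ B
    · rw [Finset.card_erase_of_mem hx]
    · rw [Finset.erase_eq_of_notMem hx]; omega
  have := mx_le_rank hM h2 h1
  omega

-- basis extension
lemma mx_mx_basis_extend_aux : ∀ (n : ℕ) (S J : Finset α), Ind J → J ⊆ S →
    matroidRank Ind S - J.card ≤ n →
    ∃ B, J ⊆ B ∧ B ⊆ S ∧ Ind B ∧ B.card = matroidRank Ind S := by
  intro n
  induction n with
  | zero =>
    intro S J hJ hJS h
    have := mx_le_rank hM hJ hJS
    exact ⟨J, subset_refl J, hJS, hJ, by omega⟩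
  | succ n ih =>
    intro S J hJ hJS h
    by_cases hc : J.card = matroidRank Ind S
    · exact ⟨J, subset_refl J, hJS, hJ, hc⟩
    · have hlt : J.card < matroidRank Ind S := lt_of_le_of_ne (mx_le_rank hM hJ hJS) hc
      obtain ⟨B₀, hB₀S, hB₀I, hB₀c⟩ := mx_exists_basis hM S
      obtain ⟨e, heB, heJ, heI⟩ := hM.2.2 hJ hB₀I (by omega)
      have hsub : insert e J ⊆ S := Finset.insert_subset (hB₀S heB) hJS
      have hcard : (insert e J).card = J.card + 1 := Finset.card_insert_of_notMem heJ
      obtain ⟨B, h1, h2, h3, h4⟩ := ih S (insert e J) heI hsub (by omega)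
      exact ⟨B, (Finset.subset_insert e J).trans h1, h2, h3, h4⟩

lemma mx_basis_extend {S J : Finset α} (hJ : Ind J) (hJS : J ⊆ S) :
    ∃ B, J ⊆ B ∧ B ⊆ S ∧ Ind B ∧ B.card = matroidRank Ind S :=
  mx_mx_basis_extend_aux hM _ S J hJ hJS le_rfl

lemma mx_rank_submod (X Y : Finset α) :
    matroidRank Ind (X ∪ Y) + matroidRank Ind (X ∩ Y) ≤
      matroidRank Ind X + matroidRank Ind Y := by
  obtain ⟨C, hCsub, hCI, hCc⟩ := mx_exists_basis hM (X ∩ Y)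
  obtain ⟨B, hCB, hBsub, hBI, hBc⟩ :=
    mx_basis_extend hM hCI (hCsub.trans (Finset.inter_subset_union.trans (subset_refl _)))
  -- B basis of X ∪ Y containing C
  have hBX : Ind (B ∩ X) := hM.2.1 hBI (Finset.inter_subset_left)
  have hBY : Ind (B ∩ Y) := hM.2.1 hBI (Finset.inter_subset_left)
  have h1 : (B ∩ X).card ≤ matroidRank Ind X := mx_le_rank hM hBX Finset.inter_subset_right
  have h2 : (B ∩ Y).card ≤ matroidRank Ind Y := mx_le_rank hM hBY Finset.inter_subset_right
  have hints : B ∩ X ∩ (B ∩ Y) = B ∩ (X ∩ Y) := by ext a; simp; tauto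
  have hXYB : (B ∩ (X ∩ Y)).card = matroidRank Ind (X ∩ Y) := by
    have hle : (B ∩ (X ∩ Y)).card ≤ matroidRank Ind (X ∩ Y) :=
      mx_le_rank hM (hM.2.1 hBI Finset.inter_subset_left) Finset.inter_subset_right
    have hge : C ⊆ B ∩ (X ∩ Y) := Finset.subset_inter hCB hCsub
    have := Finset.card_le_card hge
    omega
  have hBunion : (B ∩ X) ∪ (B ∩ Y) = B := by
    ext a; simp only [Finset.mem_union, Finset.mem_inter]
    constructor
    · tauto
    · intro ha; rcases Finset.mem_union.mp (hBsub ha) with h | h <;> tauto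
  have hcu := Finset.card_union_add_card_inter (B ∩ X) (B ∩ Y)
  rw [hBunion, hints] at hcu
  omega

end RankLemmas

section Intersection

variable {α : Type*} [DecidableEq α]

/-- Local rank axioms on subsets of a ground set `G`. -/
def MxRankFn (r : Finset α → ℤ) (G : Finset α) : Prop :=
  r ∅ = 0 ∧
  (∀ X ⊆ G, ∀ x ∈ G, r X ≤ r (insert x X) ∧ r (insert x X) ≤ r X + 1) ∧
  (∀ X ⊆ G, ∀ Y ⊆ G, r (X ∪ Y) + r (X ∩ Y) ≤ r X + r Y)

lemma MxRankFn.restrict {r : Finset α → ℤ} {G H : Finset α} (h : MxRankFn r G)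
    (hHG : H ⊆ G) : MxRankFn r H :=
  ⟨h.1, fun X hX x hx => h.2.1 X (hX.trans hHG) x (hHG hx),
    fun X hX Y hY => h.2.2 X (hX.trans hHG) Y (hY.trans hHG)⟩

lemma MxRankFn.singleton_bounds {r : Finset α → ℤ} {G : Finset α} (h : MxRankFn r G)
    {e : α} (he : e ∈ G) : 0 ≤ r {e} ∧ r {e} ≤ 1 := by
  have := h.2.1 ∅ (Finset.empty_subset G) e he
  rw [h.1] at this
  simpa using this

lemma MxRankFn.contract {r : Finset α → ℤ} {G : Finset α} (h : MxRankFn r G)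
    {e : α} (he : e ∈ G) (h1 : r {e} = 1) :
    MxRankFn (fun X => r (insert e X) - 1) (G.erase e) := by
  refine ⟨by simp [h1], ?_, ?_⟩
  · intro X hX x hx
    have hXG : insert e X ⊆ G :=
      Finset.insert_subset he ((hX.trans (Finset.erase_subset _ _)))
    have h' := h.2.1 (insert e X) hXG x (Finset.mem_of_mem_erase hx)
    rw [Finset.insert_comm x e X] at h'
    dsimp only
    omega
  · intro X hX Y hY
    have hXG : insert e X ⊆ G := Finset.insert_subset he (hX.trans (Finset.erase_subset _ _))
    have hYG : insert e Y ⊆ G := Finset.insert_subset he (hY.trans (Finset.erase_subset _ _))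
    have hsub := h.2.2 (insert e X) hXG (insert e Y) hYG
    have hU : insert e X ∪ insert e Y = insert e (X ∪ Y) := by ext a; simp; try tauto
    have hI : insert e X ∩ insert e Y = insert e (X ∩ Y) := by ext a; simp; try tauto
    rw [hU, hI] at hsub
    dsimp only
    omega

/-- Elementary matroid intersection theorem (hard direction), by
deletion/contraction induction. -/
lemma mx_intersection : ∀ (n : ℕ) (G : Finset α), G.card ≤ n →
    ∀ (r₁ r₂ : Finset α → ℤ), MxRankFn r₁ G → MxRankFn r₂ G →
    ∀ k : ℤ, (∀ X ⊆ G, k ≤ r₁ X + r₂ (G \ X)) →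
    ∃ J ⊆ G, r₁ J = J.card ∧ r₂ J = J.card ∧ k ≤ (J.card : ℤ) := by
  intro n
  induction n with
  | zero =>
    intro G hG r₁ r₂ h₁ h₂ k hk
    have hGe : G = ∅ := Finset.card_eq_zero.mp (Nat.le_zero.mp hG)
    refine ⟨∅, Finset.empty_subset G, by simp [h₁.1], by simp [h₂.1], ?_⟩
    have := hk ∅ (Finset.empty_subset G)
    simpa [hGe, h₁.1, h₂.1] using this
  | succ n ih =>
    intro G hG r₁ r₂ h₁ h₂ k hk
    rcases Finset.eq_empty_or_nonempty G with hGe | ⟨e, he⟩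
    · refine ⟨∅, Finset.empty_subset G, by simp [h₁.1], by simp [h₂.1], ?_⟩
      have := hk ∅ (Finset.empty_subset G)
      simpa [hGe, h₁.1, h₂.1] using this
    have hGcard : (G.erase e).card ≤ n := by
      have := Finset.card_erase_of_mem he
      omega
    have hrestr₁ : MxRankFn r₁ (G.erase e) := h₁.restrict (Finset.erase_subset _ _)
    have hrestr₂ : MxRankFn r₂ (G.erase e) := h₂.restrict (Finset.erase_subset _ _)
    by_cases hl₁ : r₁ {e} = 0
    · -- e is a loop of M₁ : delete it
      refine (ih (G.erase e) hGcard r₁ r₂ hrestr₁ hrestr₂ k ?_).imp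
        (fun J hJ => ⟨hJ.1.trans (Finset.erase_subset _ _), hJ.2⟩)
      intro X hX
      have heX : e ∉ X := fun hc => (Finset.mem_erase.mp (hX hc)).1 rfl
      have key := hk (insert e X) (Finset.insert_subset he (hX.trans (Finset.erase_subset _ _)))
      have hins : r₁ (insert e X) ≤ r₁ X := by
        have := h₁.2.2 X (hX.trans (Finset.erase_subset _ _)) {e}
          (Finset.singleton_subset_iff.mpr he)
        have hXe : X ∩ {e} = ∅ := by
          ext a
          simp only [Finset.mem_inter, Finset.mem_singleton, Finset.notMem_empty, iff_false,
            not_and]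
          rintro ha rfl; exact heX ha
        have hXu : X ∪ {e} = insert e X := by ext a; simp; try tauto
        rw [hXe, hXu, h₁.1] at this
        omega
      have hsd : G \ insert e X = G.erase e \ X := by
        ext a; simp [Finset.mem_erase, Finset.mem_sdiff]; tauto
      rw [hsd] at key
      omega
    by_cases hl₂ : r₂ {e} = 0
    · -- e is a loop of M₂ : delete it
      refine (ih (G.erase e) hGcard r₁ r₂ hrestr₁ hrestr₂ k ?_).imp
        (fun J hJ => ⟨hJ.1.trans (Finset.erase_subset _ _), hJ.2⟩)
      intro X hX
      have heX : e ∉ X := fun hc => (Finset.mem_erase.mp (hX hc)).1 rfl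
      have key := hk X (hX.trans (Finset.erase_subset _ _))
      have hsd : G \ X = insert e (G.erase e \ X) := by
        ext a
        simp only [Finset.mem_sdiff, Finset.mem_insert, Finset.mem_erase]
        constructor
        · rintro ⟨haG, haX⟩
          by_cases hae : a = e
          · exact Or.inl hae
          · exact Or.inr ⟨⟨hae, haG⟩, haX⟩
        · rintro (rfl | ⟨⟨_, haG⟩, haX⟩)
          · exact ⟨he, heX⟩
          · exact ⟨haG, haX⟩
      have hins : r₂ (insert e (G.erase e \ X)) ≤ r₂ (G.erase e \ X) := by
        set Y := G.erase e \ X with hY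
        have hYG : Y ⊆ G := (Finset.sdiff_subset).trans (Finset.erase_subset _ _)
        have heY : e ∉ Y := fun hc => (Finset.mem_erase.mp (Finset.mem_sdiff.mp hc).1).1 rfl
        have := h₂.2.2 Y hYG {e} (Finset.singleton_subset_iff.mpr he)
        have hYe : Y ∩ {e} = ∅ := by
          ext a
          simp only [Finset.mem_inter, Finset.mem_singleton, Finset.notMem_empty, iff_false,
            not_and]
          rintro ha rfl; exact heY ha
        have hYu : Y ∪ {e} = insert e Y := by ext a; simp; try tauto
        rw [hYe, hYu, h₂.1] at this
        omega
      rw [hsd] at key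
      omega
    have h1e : r₁ {e} = 1 := by
      have := h₁.singleton_bounds he; omega
    have h2e : r₂ {e} = 1 := by
      have := h₂.singleton_bounds he; omega
    by_cases hdel : ∀ X ⊆ G.erase e, k ≤ r₁ X + r₂ (G.erase e \ X)
    · -- deletion works
      exact (ih (G.erase e) hGcard r₁ r₂ hrestr₁ hrestr₂ k hdel).imp
        (fun J hJ => ⟨hJ.1.trans (Finset.erase_subset _ _), hJ.2⟩)
    by_cases hcon : ∀ X ⊆ G.erase e, k + 1 ≤ r₁ (insert e X) + r₂ (G \ X)
    · -- contraction works
      have hc₁ := h₁.contract he h1e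
      have hc₂ := h₂.contract he h2e
      have hcond : ∀ X ⊆ G.erase e, k - 1 ≤
          (fun X => r₁ (insert e X) - 1) X + (fun X => r₂ (insert e X) - 1) (G.erase e \ X) := by
        intro X hX
        have hins : insert e (G.erase e \ X) = G \ X := by
          have heX : e ∉ X := fun hc => (Finset.mem_erase.mp (hX hc)).1 rfl
          ext a
          simp only [Finset.mem_insert, Finset.mem_sdiff, Finset.mem_erase]
          constructor
          · rintro (rfl | ⟨⟨_, haG⟩, haX⟩)
            · exact ⟨he, heX⟩
            · exact ⟨haG, haX⟩
          · rintro ⟨haG, haX⟩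
            by_cases hae : a = e
            · exact Or.inl hae
            · exact Or.inr ⟨⟨hae, haG⟩, haX⟩
        have := hcon X hX
        dsimp only
        rw [hins]
        omega
      obtain ⟨J', hJ'sub, hJ'1, hJ'2, hJ'k⟩ :=
        ih (G.erase e) hGcard _ _ hc₁ hc₂ (k - 1) hcond
      have heJ' : e ∉ J' := fun hc => (Finset.mem_erase.mp (hJ'sub hc)).1 rfl
      refine ⟨insert e J', Finset.insert_subset he (hJ'sub.trans (Finset.erase_subset _ _)),
        ?_, ?_, ?_⟩
      · rw [Finset.card_insert_of_notMem heJ']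
        push_cast
        omega
      · rw [Finset.card_insert_of_notMem heJ']
        push_cast
        omega
      · rw [Finset.card_insert_of_notMem heJ']
        push_cast
        omega
    · -- both fail: contradiction
      exfalso
      push_neg at hdel hcon
      obtain ⟨X, hX, hXlt⟩ := hdel
      obtain ⟨Y, hY, hYlt⟩ := hcon
      have heX : e ∉ X := fun hc => (Finset.mem_erase.mp (hX hc)).1 rfl
      have heY : e ∉ Y := fun hc => (Finset.mem_erase.mp (hY hc)).1 rfl
      have hXG : X ⊆ G := hX.trans (Finset.erase_subset _ _)
      have hYG : Y ⊆ G := hY.trans (Finset.erase_subset _ _)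
      have hA1 : insert e (X ∪ Y) ⊆ G := Finset.insert_subset he (Finset.union_subset hXG hYG)
      have key1 := hk (insert e (X ∪ Y)) hA1
      have key2 := hk (X ∩ Y) ((Finset.inter_subset_left).trans hXG)
      have hs₁ := h₁.2.2 X hXG (insert e Y) (Finset.insert_subset he hYG)
      have e₁ : X ∪ insert e Y = insert e (X ∪ Y) := by ext a; simp; try tauto
      have e₂ : X ∩ insert e Y = X ∩ Y := by
        ext a; simp only [Finset.mem_inter, Finset.mem_insert]
        constructor
        · rintro ⟨haX, rfl | haY⟩
          · exact absurd haX heX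
          · exact ⟨haX, haY⟩
        · tauto
      rw [e₁, e₂] at hs₁
      have hs₂ := h₂.2.2 (G.erase e \ X)
        ((Finset.sdiff_subset).trans (Finset.erase_subset _ _)) (G \ Y) (Finset.sdiff_subset)
      have e₃ : (G.erase e \ X) ∪ (G \ Y) = G \ (X ∩ Y) := by
        ext a
        simp only [Finset.mem_union, Finset.mem_sdiff, Finset.mem_erase, Finset.mem_inter]
        constructor
        · rintro (⟨⟨_, haG⟩, haX⟩ | ⟨haG, haY⟩) <;> [exact ⟨haG, fun h => haX h.1⟩;
            exact ⟨haG, fun h => haY h.2⟩]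
        · rintro ⟨haG, ha⟩
          by_cases hae : a = e
          · subst hae; exact Or.inr ⟨haG, heY⟩
          · by_cases haX : a ∈ X
            · exact Or.inr ⟨haG, fun haY => ha ⟨haX, haY⟩⟩
            · exact Or.inl ⟨⟨hae, haG⟩, haX⟩
      have e₄ : (G.erase e \ X) ∩ (G \ Y) = G \ insert e (X ∪ Y) := by
        ext a
        simp only [Finset.mem_inter, Finset.mem_sdiff, Finset.mem_erase, Finset.mem_insert,
          Finset.mem_union]
        tauto
      rw [e₃, e₄] at hs₂
      omega

end Intersection

section Main

variable {E : Type*} [DecidableEq E] {Ind : Finset E → Prop}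

lemma mx_primal_rankfn (hM : IsMatroidIndep Ind) (G : Finset E) :
    MxRankFn (fun X => (matroidRank Ind X : ℤ)) G := by
  refine ⟨by simp [mx_rank_empty hM], ?_, ?_⟩
  · intro X _ x _
    have h1 := mx_rank_mono hM (Finset.subset_insert x X)
    have h2 := mx_rank_insert_le hM X x
    constructor <;> push_cast <;> omega
  · intro X _ Y _
    have := mx_rank_submod hM X Y
    push_cast
    omega

lemma mx_dual_rankfn (hM : IsMatroidIndep Ind) (I : Finset E) :
    MxRankFn (fun X => (X.card : ℤ) + (matroidRank Ind (I \ X) : ℤ) - (matroidRank Ind I : ℤ))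
      I := by
  refine ⟨by simp, ?_, ?_⟩
  · intro X hX x hx
    by_cases hxX : x ∈ X
    · rw [Finset.insert_eq_self.mpr hxX]
      omega
    · have hcard : (insert x X).card = X.card + 1 := Finset.card_insert_of_notMem hxX
      have hsd : I \ insert x X = (I \ X).erase x := by
        ext a
        simp only [Finset.mem_sdiff, Finset.mem_insert, Finset.mem_erase]
        tauto
      have hxIX : x ∈ I \ X := Finset.mem_sdiff.mpr ⟨hx, hxX⟩
      have h1 : matroidRank Ind ((I \ X).erase x) ≤ matroidRank Ind (I \ X) :=
        mx_rank_mono hM (Finset.erase_subset _ _)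
      have h2 : matroidRank Ind (I \ X) ≤ matroidRank Ind ((I \ X).erase x) + 1 := by
        have := mx_rank_insert_le hM ((I \ X).erase x) x
        rwa [Finset.insert_erase hxIX] at this
      dsimp only
      rw [hsd, hcard]
      constructor <;> push_cast <;> omega
  · intro X _ Y _
    have hU : I \ (X ∪ Y) = (I \ X) ∩ (I \ Y) := by
      ext a; simp only [Finset.mem_sdiff, Finset.mem_union, Finset.mem_inter]; tauto
    have hI : I \ (X ∩ Y) = (I \ X) ∪ (I \ Y) := by
      ext a; simp only [Finset.mem_sdiff, Finset.mem_inter, Finset.mem_union]; tauto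
    have hsub := mx_rank_submod hM (I \ X) (I \ Y)
    have hcard := Finset.card_union_add_card_inter X Y
    dsimp only
    rw [hU, hI]
    omega

theorem mx_cover (hM : IsMatroidIndep Ind) (I : Finset E)
    (hInd : ∀ I' ⊆ I, I'.Nonempty → (I'.card : ℤ) ≤ 2 * matroidRank Ind I' - 1) :
    ∃ J ⊆ I, Ind J ∧ Ind (I \ J) ∧
      (I \ J).card = matroidRank Ind I ∧ J.card + matroidRank Ind I = I.card := by
  have hcond : ∀ X ⊆ I, ((I.card : ℤ) - (matroidRank Ind I : ℤ)) ≤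
      (matroidRank Ind X : ℤ) +
        (((I \ X).card : ℤ) + (matroidRank Ind (I \ (I \ X)) : ℤ) - (matroidRank Ind I : ℤ)) := by
    intro X hX
    have hXX : I \ (I \ X) = X := by
      ext a; simp only [Finset.mem_sdiff, not_and, not_not]
      constructor
      · rintro ⟨haI, h⟩; exact h haI
      · intro haX; exact ⟨hX haX, fun _ => haX⟩
    have hc : (I \ X).card + X.card = I.card := Finset.card_sdiff_add_card_eq_card hX
    have hX2 : (X.card : ℤ) ≤ 2 * matroidRank Ind X := by
      rcases Finset.eq_empty_or_nonempty X with rfl | hne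
      · simp
      · have := hInd X hX hne; omega
    rw [hXX]
    push_cast at hc
    omega
  obtain ⟨J, hJI, hJ1, hJ2, hJk⟩ := mx_intersection I.card I le_rfl _ _
    (mx_primal_rankfn hM I) (mx_dual_rankfn hM I)
    ((I.card : ℤ) - (matroidRank Ind I : ℤ)) hcond
  have hJrank : matroidRank Ind J = J.card := by exact_mod_cast hJ1
  have hJdual : matroidRank Ind (I \ J) = matroidRank Ind I := by
    have : (J.card : ℤ) + (matroidRank Ind (I \ J) : ℤ) - (matroidRank Ind I : ℤ)
        = (J.card : ℤ) := hJ2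
    exact_mod_cast by omega
  have hc : (I \ J).card + J.card = I.card := Finset.card_sdiff_add_card_eq_card hJI
  have hle : matroidRank Ind (I \ J) ≤ (I \ J).card := mx_rank_le_card hM _
  have hcardJ : J.card + matroidRank Ind I = I.card := by omega
  have hsdcard : (I \ J).card = matroidRank Ind I := by omega
  exact ⟨J, hJI, mx_indep_of_rank_eq hM hJrank,
    mx_indep_of_rank_eq hM (by omega), hsdcard, hcardJ⟩

end Main


/-- if `I` is (nonempty and) independent in `M(2r - 1)`, then
`I = I₁ ∪ I₂` with `I₁, I₂` independent in `M`, each spanning `I`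
(`r(I₁) = r(I₂) = r(I)`), and `|I₁ ∩ I₂| ≥ 1`. -/
theorem indep_2r_sub_one_decomposition {E : Type*} [Fintype E] [DecidableEq E]
    (Ind : Finset E → Prop) (hM : IsMatroidIndep Ind) (I : Finset E)
    (hInd : ∀ I' ⊆ I, I'.Nonempty → (I'.card : ℤ) ≤ 2 * matroidRank Ind I' - 1)
    (hne : I.Nonempty) :
    ∃ I₁ I₂ : Finset E, Ind I₁ ∧ Ind I₂ ∧ I = I₁ ∪ I₂ ∧
      matroidRank Ind I₁ = matroidRank Ind I ∧
      matroidRank Ind I₂ = matroidRank Ind I ∧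
      1 ≤ (I₁ ∩ I₂).card := by
  obtain ⟨J, hJI, hJInd, hIJInd, hsdcard, hcardJ⟩ := mx_cover hM I hInd
  obtain ⟨B, hJB, hBI, hBInd, hBcard⟩ := mx_basis_extend hM hJInd hJI
  have hunion : I = (I \ J) ∪ B := by
    ext a
    simp only [Finset.mem_union, Finset.mem_sdiff]
    constructor
    · intro haI
      by_cases haJ : a ∈ J
      · exact Or.inr (hJB haJ)
      · exact Or.inl ⟨haI, haJ⟩
    · rintro (⟨haI, _⟩ | haB)
      · exact haI
      · exact hBI haB
  refine ⟨I \ J, B, hIJInd, hBInd, hunion, ?_, ?_, ?_⟩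
  · rw [mx_rank_eq_of_indep hM hIJInd, hsdcard]
  · rw [mx_rank_eq_of_indep hM hBInd, hBcard]
  · have hcu := Finset.card_union_add_card_inter (I \ J) B
    rw [← hunion] at hcu
    have hIneq := hInd I (subset_refl I) hne
    have h2 : (I.card : ℤ) ≤ 2 * matroidRank Ind I - 1 := hIneq
    omega
end

section
/- Let M and N be matroids on a common finite ground set E with rank functions r_M and r_N, let I ⊆ E, and suppose I = I₁ ∪ I₂ with I₁ independent and spanning in M|I, I₂ independent and spanning in N|I, and I₁ ⊆ cl_N(I₂), I₂ ⊆ cl_M(I₁). Then r_M(I) + r_N(I) = |I₁| + |I₂|. Consequently, if additionally I is independent in M(r_M + r_N − 1), then either I = ∅ or I₁ ∩ I₂ ≠ ∅. -/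
/-- `e` lies in the closure of `S`: adding `e` to `S` does not increase the rank. -/
def memClosure {α : Type*} [DecidableEq α] (Ind : Finset α → Prop) (e : α) (S : Finset α) : Prop :=
  matroidRank Ind (insert e S) = matroidRank Ind S

lemma matroidRank_of_indep {α : Type*} [DecidableEq α] {Ind : Finset α → Prop}
    (h : IsMatroidIndep Ind) {J : Finset α} (hJ : Ind J) :
    matroidRank Ind J = J.card := by
  apply le_antisymm
  · refine csSup_le ⟨0, ⟨∅, Finset.empty_subset _, h.1, rfl⟩⟩ ?_
    rintro n ⟨K, hKJ, -, rfl⟩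
    exact Finset.card_le_card hKJ
  · refine le_csSup ⟨J.card, ?_⟩ ⟨J, subset_rfl, hJ, rfl⟩
    rintro n ⟨K, hKJ, -, rfl⟩
    exact Finset.card_le_card hKJ

/-- if `I = I₁ ∪ I₂` with `I₁` independent and spanning in `M|I`,
`I₂` independent and spanning in `N|I`, `I₁ ⊆ cl_N(I₂)` and `I₂ ⊆ cl_M(I₁)`, then
`r_M(I) + r_N(I) = |I₁| + |I₂|`; consequently if `I` is independent in
`M(r_M + r_N - 1)` then `I = ∅` or `I₁ ∩ I₂ ≠ ∅`. -/
theorem rank_sum_eq_card_sum {E : Type*} [Fintype E] [DecidableEq E]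
    (IndM IndN : Finset E → Prop)
    (hM : IsMatroidIndep IndM) (hN : IsMatroidIndep IndN)
    (I I₁ I₂ : Finset E) (hunion : I = I₁ ∪ I₂)
    (hI₁ : IndM I₁) (hI₁span : matroidRank IndM I₁ = matroidRank IndM I)
    (hI₂ : IndN I₂) (hI₂span : matroidRank IndN I₂ = matroidRank IndN I)
    (hclN : ∀ e ∈ I₁, memClosure IndN e I₂)
    (hclM : ∀ e ∈ I₂, memClosure IndM e I₁) :
    (matroidRank IndM I : ℤ) + matroidRank IndN I = I₁.card + I₂.card ∧
      ((∀ I' ⊆ I, I'.Nonempty →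
          (I'.card : ℤ) ≤ matroidRank IndM I' + matroidRank IndN I' - 1) →
        I = ∅ ∨ (I₁ ∩ I₂).Nonempty) := by
  have h1 : matroidRank IndM I = I₁.card := by
    rw [← hI₁span, matroidRank_of_indep hM hI₁]
  have h2 : matroidRank IndN I = I₂.card := by
    rw [← hI₂span, matroidRank_of_indep hN hI₂]
  refine ⟨by rw [h1, h2], fun hcond => ?_⟩
  rcases Finset.eq_empty_or_nonempty I with hI | hI
  · exact Or.inl hI
  · right
    have := hcond I subset_rfl hI
    rw [h1, h2] at this
    have hcu : I.card + (I₁ ∩ I₂).card = I₁.card + I₂.card := by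
      rw [hunion]; exact Finset.card_union_add_card_inter _ _
    rw [← Finset.card_pos]
    omega
end

section
/- For a matroid M on ground set E and a flag of flats 𝓕 of M, let K_𝓕 = {ω ∈ ℝ^E : ω_e ≤ ω_f when 𝓕^e ⊊ 𝓕^f and ω_e = ω_f when 𝓕^e = 𝓕^f}. Then for matroids M, N on common finite ground set E and flags 𝓕, 𝓖, the linear span of the Minkowski sum K_𝓕 + K_𝓖 equals the column span of the vertex-edge incidence matrix of the bipartite multigraph H^E_{𝓕,𝓖}; in particular its dimension equals the rank of the graphic matroid of H^E_{𝓕,𝓖}. -/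
open scoped Classical Pointwise

/-- The Bergman cone `K_𝓕` associated to a minimal-flat function `Fm` of a flag:
`ω_e ≤ ω_f` when `Fm e ⊊ Fm f` and `ω_e = ω_f` when `Fm e = Fm f`. -/
def bergmanCone {E : Type*} (Fm : E → Set E) : Set (E → ℝ) :=
  {ω | ∀ e f : E, (Fm e ⊂ Fm f → ω e ≤ ω f) ∧ (Fm e = Fm f → ω e = ω f)}

/-- The column of the incidence matrix of `H^E_{𝓕,𝓖}` indexed by a flat `F`
(on the `𝓕`-side): the characteristic vector of `{e | Fm e = F}`. -/
noncomputable def incidenceCol {E : Type*} (Fm : E → Set E) (F : Set E) : E → ℝ :=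
  fun e => if Fm e = F then 1 else 0

/-!
Since both cones contain `0`, the span of `K_𝓕 + K_𝓖` is the sum of the spans. The span of
`K_𝓕` is the span of the indicators of the fibres of `Fm`: a point of the cone is constant on
fibres, and the indicator of the fibre over `F` is the difference of the points `1[F ⊆ Fm e]`
and `1[F ⊊ Fm e]` of the cone. These indicators are the columns of the incidence matrix of
`H^E_{𝓕,𝓖}`; its rank is its row rank, and a set of rows of the incidence matrix of a
bipartite graph is linearly independent exactly when the edges form a forest: a forest has a
leaf, whose row is the only one with a nonzero entry at the leaf, while a nonempty edge set
with at least as many edges as vertices has its rows in a space of dimension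
`#vertices - 1`.
-/

open Module Submodule Set

theorem Submodule.span_add_of_zero_mem {R M : Type*} [Semiring R] [AddCommMonoid M]
    [Module R M] {s t : Set M} (hs : 0 ∈ s) (ht : 0 ∈ t) :
    span R (s + t) = span R s ⊔ span R t := by
  refine le_antisymm ?_ (sup_le (span_mono (subset_add_left s ht))
    (span_mono (subset_add_right t hs)))
  rw [span_le, coe_sup]
  exact add_subset_add subset_span subset_span

theorem finrank_span_range_eq_sSup_card_linearIndepOn {K V ι : Type*} [DivisionRing K]
    [AddCommGroup V] [Module K V] [Finite ι] (v : ι → V) :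
    finrank K (span K (range v)) =
      sSup {n | ∃ I : Finset ι, LinearIndepOn K v I ∧ I.card = n} := by
  have finrank_eq {I : Finset ι} (hI : LinearIndepOn K v I) :
      finrank K (span K (v '' I)) = I.card := by
    rw [image_eq_range, finrank_span_eq_card hI]
    simp
  refine (IsGreatest.csSup_eq ⟨?_, ?_⟩).symm
  · obtain ⟨b, -, -, hspan, hb⟩ :=
      exists_linearIndepOn_extension (linearIndepOn_empty K v) (empty_subset univ)
    have hbfin : b.Finite := toFinite b
    refine ⟨hbfin.toFinset, by simpa using hb, ?_⟩
    have hspan' : span K (v '' b) = span K (range v) :=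
      le_antisymm (span_mono (image_subset_range v b)) (image_univ ▸ span_le.2 hspan)
    rw [← finrank_eq (by simpa using hb), hbfin.coe_toFinset, hspan']
  · rintro n ⟨I, hI, rfl⟩
    have := Module.Finite.span_of_finite K (finite_range v)
    rw [← finrank_eq hI]
    exact Submodule.finrank_mono (span_mono (image_subset_range v I))

theorem notMem_span_image_of_apply_ne_zero {K ι κ : Type*} [Semiring K] {v : ι → κ → K}
    {s : Set ι} {i : ι} (x : κ) (hi : v i x ≠ 0) (hs : ∀ j ∈ s, v j x = 0) :
    v i ∉ span K (v '' s) := by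
  have hker : span K (v '' s) ≤ LinearMap.ker (LinearMap.proj x) :=
    span_le.2 (by rintro _ ⟨j, hj, rfl⟩; exact hs j hj)
  exact fun h => hi (hker h)

theorem Finset.exists_fiber_subsingleton_of_card_lt_two_mul {ι α : Type*} {f : ι → α}
    {s : Finset ι} (h : s.card < 2 * (s.image f).card) :
    ∃ i ∈ s, ∀ j ∈ s, f j = f i → j = i := by
  by_contra! hfib
  refine h.not_ge (Finset.mul_card_image_le_card s 2 fun a ha => ?_)
  obtain ⟨i, hi, rfl⟩ := Finset.mem_image.1 ha
  obtain ⟨j, hj, hji, hne⟩ := hfib i hi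
  exact Finset.one_lt_card.2 ⟨j, by simp [hj, hji], i, by simp [hi], hne⟩

/-- Row `e` of the vertex–edge incidence matrix of the bipartite multigraph on `α ⊔ β` in which
edge `e` joins `f e` to `g e`. -/
noncomputable def incidenceRow (K : Type*) [Semiring K] {E α β : Type*} (f : E → α) (g : E → β)
    (e : E) : α ⊕ β → K :=
  Pi.single (.inl (f e)) 1 + Pi.single (.inr (g e)) 1

/-- `I` is the edge set of a forest, i.e. independent in the graphic matroid. -/
def IsBipartiteForest {E α β : Type*} (f : E → α) (g : E → β) (I : Finset E) : Prop :=
  ∀ J ⊆ I, J.Nonempty → J.card < (J.image f).card + (J.image g).card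

section BipartiteIncidence

variable {K : Type*} [Field K] {E α β : Type*} {f : E → α} {g : E → β}

theorem IsBipartiteForest.mono {I J : Finset E} (hI : IsBipartiteForest f g I) (hJ : J ⊆ I) :
    IsBipartiteForest f g J :=
  fun J' hJ' => hI J' (hJ'.trans hJ)

theorem incidenceRow_notMem_span_erase_of_inl {I : Finset E} {e : E}
    (huniq : ∀ j ∈ I, f j = f e → j = e) :
    incidenceRow K f g e ∉ span K (incidenceRow K f g '' ↑(I.erase e)) :=
  notMem_span_image_of_apply_ne_zero (.inl (f e)) (by simp [incidenceRow]) fun j hj => by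
    have : f j ≠ f e := fun h =>
      (Finset.mem_erase.1 hj).1 (huniq j (Finset.mem_of_mem_erase hj) h)
    simp [incidenceRow, this]

theorem incidenceRow_notMem_span_erase_of_inr {I : Finset E} {e : E}
    (huniq : ∀ j ∈ I, g j = g e → j = e) :
    incidenceRow K f g e ∉ span K (incidenceRow K f g '' ↑(I.erase e)) :=
  notMem_span_image_of_apply_ne_zero (.inr (g e)) (by simp [incidenceRow]) fun j hj => by
    have : g j ≠ g e := fun h =>
      (Finset.mem_erase.1 hj).1 (huniq j (Finset.mem_of_mem_erase hj) h)
    simp [incidenceRow, this]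

theorem IsBipartiteForest.exists_notMem_span {I : Finset E} (hI : IsBipartiteForest f g I)
    (hne : I.Nonempty) :
    ∃ e ∈ I, incidenceRow K f g e ∉ span K (incidenceRow K f g '' ↑(I.erase e)) := by
  have hcard := hI I subset_rfl hne
  rcases lt_or_ge I.card (2 * (I.image f).card) with hf | hg
  · obtain ⟨e, he, huniq⟩ := Finset.exists_fiber_subsingleton_of_card_lt_two_mul hf
    exact ⟨e, he, incidenceRow_notMem_span_erase_of_inl huniq⟩
  · obtain ⟨e, he, huniq⟩ :=
      Finset.exists_fiber_subsingleton_of_card_lt_two_mul (s := I) (f := g) (by omega)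
    exact ⟨e, he, incidenceRow_notMem_span_erase_of_inr huniq⟩

theorem IsBipartiteForest.linearIndepOn_incidenceRow {I : Finset E}
    (hI : IsBipartiteForest f g I) : LinearIndepOn K (incidenceRow K f g) I := by
  induction I using Finset.strongInduction with
  | H I ih =>
  rcases I.eq_empty_or_nonempty with rfl | hne
  · simp
  obtain ⟨e, he, hleaf⟩ := hI.exists_notMem_span (K := K) hne
  rw [← Finset.insert_erase he, Finset.coe_insert, linearIndepOn_insert (by simp)]
  exact ⟨ih _ (Finset.erase_ssubset he) (hI.mono (Finset.erase_subset e I)), hleaf⟩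

theorem finrank_span_incidenceRow_lt {J : Finset E} {e₀ : E} (he₀ : e₀ ∈ J) :
    finrank K (span K (incidenceRow K f g '' J)) < (J.image f).card + (J.image g).card := by
  let δ : α ⊕ β → α ⊕ β → K := fun x => Pi.single x 1
  let b₀ := g e₀
  -- each row `δ (f e) + δ (g e)` equals `(δ (f e) + δ b₀) + (δ (g e) - δ b₀)`
  let U : Finset (α ⊕ β → K) :=
    (J.image f).image (fun a => δ (.inl a) + δ (.inr b₀)) ∪
      ((J.image g).erase b₀).image (fun b => δ (.inr b) - δ (.inr b₀))
  have hrows : span K (incidenceRow K f g '' J) ≤ span K U := by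
    refine span_le.2 ?_
    rintro _ ⟨e, he, rfl⟩
    have hdecomp : incidenceRow K f g e =
        (δ (.inl (f e)) + δ (.inr b₀)) + (δ (.inr (g e)) - δ (.inr b₀)) := by
      simp only [incidenceRow, δ]
      abel
    rw [hdecomp]
    refine add_mem (subset_span (Finset.mem_coe.2 (Finset.mem_union_left _
      (Finset.mem_image_of_mem _ (Finset.mem_image_of_mem f he))))) ?_
    rcases eq_or_ne (g e) b₀ with hb | hb
    · simp [hb]
    · exact subset_span (Finset.mem_coe.2 (Finset.mem_union_right _
        (Finset.mem_image_of_mem _ (Finset.mem_erase.2 ⟨hb, Finset.mem_image_of_mem g he⟩))))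
  have hU : U.card < (J.image f).card + (J.image g).card := by
    have hb₀ : b₀ ∈ J.image g := Finset.mem_image_of_mem g he₀
    calc U.card ≤ (J.image f).card + ((J.image g).erase b₀).card :=
          (Finset.card_union_le _ _).trans (add_le_add Finset.card_image_le Finset.card_image_le)
      _ < _ := by
          rw [Finset.card_erase_of_mem hb₀]
          have := Finset.card_pos.2 ⟨b₀, hb₀⟩
          omega
  calc finrank K (span K (incidenceRow K f g '' J))
      ≤ finrank K (span K (U : Set (α ⊕ β → K))) := Submodule.finrank_mono hrows
    _ ≤ U.card := finrank_span_finset_le_card U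
    _ < _ := hU

theorem linearIndepOn_incidenceRow_iff {I : Finset E} :
    LinearIndepOn K (incidenceRow K f g) I ↔ IsBipartiteForest f g I := by
  refine ⟨fun hI J hJI ⟨e, he⟩ => ?_, IsBipartiteForest.linearIndepOn_incidenceRow⟩
  have hJ : LinearIndepOn K (incidenceRow K f g) J := hI.mono (Finset.coe_subset.2 hJI)
  calc J.card = finrank K (span K (incidenceRow K f g '' J)) := by
        rw [image_eq_range, finrank_span_eq_card hJ]
        simp
    _ < _ := finrank_span_incidenceRow_lt he

theorem finrank_span_range_incidenceRow [Finite E] :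
    finrank K (span K (range (incidenceRow K f g))) =
      sSup {n | ∃ I : Finset E, IsBipartiteForest f g I ∧ I.card = n} := by
  simp_rw [finrank_span_range_eq_sSup_card_linearIndepOn, linearIndepOn_incidenceRow_iff]

end BipartiteIncidence

section BergmanCone

variable {E : Type*} {Fm : E → Set E}

theorem zero_mem_bergmanCone : (0 : E → ℝ) ∈ bergmanCone Fm :=
  fun _ _ => ⟨fun _ => le_rfl, fun _ => rfl⟩

theorem Monotone.comp_mem_bergmanCone {φ : Set E → ℝ} (hφ : Monotone φ) :
    φ ∘ Fm ∈ bergmanCone Fm :=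
  fun _ _ => ⟨fun h => hφ h.subset, fun h => congrArg φ h⟩

theorem incidenceCol_mem_span_bergmanCone (F : Set E) :
    incidenceCol Fm F ∈ span ℝ (bergmanCone Fm) := by
  have hmono {p : Set E → Prop} (hp : ∀ ⦃G H⦄, G ⊆ H → p G → p H) :
      Monotone fun G => if p G then (1 : ℝ) else 0 := by
    intro G H hGH
    by_cases hG : p G
    · simp [hG, hp hGH hG]
    · simp only [hG, if_false]
      split_ifs <;> norm_num
  have hdiff : incidenceCol Fm F = (fun G => if F ⊆ G then (1 : ℝ) else 0) ∘ Fm -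
      (fun G => if F ⊂ G then (1 : ℝ) else 0) ∘ Fm := by
    funext e
    by_cases h : Fm e = F
    · simp [incidenceCol, h]
    · by_cases h' : F ⊆ Fm e
      · simp [incidenceCol, h, h', h'.ssubset_of_ne (Ne.symm h)]
      · have : ¬F ⊂ Fm e := fun hs => h' hs.subset
        simp [incidenceCol, h, h', this]
  rw [hdiff]
  exact sub_mem (subset_span (hmono fun _ _ h hF => hF.trans h).comp_mem_bergmanCone)
    (subset_span (hmono fun _ _ h hF => hF.trans_subset h).comp_mem_bergmanCone)

theorem sum_smul_incidenceCol {𝓕 : Finset (Set E)} (h𝓕 : ∀ e, Fm e ∈ 𝓕) (φ : Set E → ℝ) :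
    ∑ F ∈ 𝓕, φ F • incidenceCol Fm F = φ ∘ Fm := by
  funext e
  simp [Finset.sum_apply, incidenceCol, h𝓕 e]

theorem span_bergmanCone {𝓕 : Finset (Set E)} (h𝓕 : ∀ e, Fm e ∈ 𝓕) :
    span ℝ (bergmanCone Fm) = span ℝ (incidenceCol Fm '' 𝓕) := by
  refine le_antisymm (span_le.2 fun ω hω => ?_)
    (span_le.2 (by rintro _ ⟨F, -, rfl⟩; exact incidenceCol_mem_span_bergmanCone F))
  have hfactor : Function.FactorsThrough ω Fm := fun e f h => (hω e f).2 h
  have hω' : ω = ∑ F ∈ 𝓕, Function.extend Fm ω 0 F • incidenceCol Fm F := by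
    rw [sum_smul_incidenceCol h𝓕]
    exact funext fun e => (hfactor.extend_apply 0 e).symm
  rw [hω']
  exact sum_mem fun F hF => smul_mem _ _ (subset_span ⟨F, hF, rfl⟩)

theorem span_range_incidenceCol [Fintype E] (Fm : E → Set E) :
    span ℝ (range (incidenceCol Fm)) = span ℝ (bergmanCone Fm) := by
  rw [span_bergmanCone (fun _ => Finset.mem_univ _), Finset.coe_univ, image_univ]

end BergmanCone

theorem col_of_incidenceRow {E : Type*} (Fm Gm : E → Set E) :
    (Matrix.of (incidenceRow ℝ Fm Gm)).col = Sum.elim (incidenceCol Fm) (incidenceCol Gm) := by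
  ext (F | G) e <;> simp [incidenceRow, incidenceCol, Pi.single_apply, eq_comm]

theorem span_bergman_sum_eq_incidence_span_general {E : Type*} [Fintype E]
    (𝓕 𝓖 : Finset (Set E))
    (Fm Gm : E → Set E)
    (hFm : ∀ e : E, Fm e ∈ 𝓕 ∧ e ∈ Fm e ∧ ∀ F ∈ 𝓕, e ∈ F → Fm e ⊆ F)
    (hGm : ∀ e : E, Gm e ∈ 𝓖 ∧ e ∈ Gm e ∧ ∀ G ∈ 𝓖, e ∈ G → Gm e ⊆ G) :
    Submodule.span ℝ (bergmanCone Fm + bergmanCone Gm) =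
      Submodule.span ℝ (incidenceCol Fm '' ↑𝓕 ∪ incidenceCol Gm '' ↑𝓖) ∧
    Module.finrank ℝ (Submodule.span ℝ (bergmanCone Fm + bergmanCone Gm)) =
      sSup {n | ∃ I : Finset E,
        (∀ J ⊆ I, J.Nonempty → J.card < (J.image Fm).card + (J.image Gm).card) ∧
        I.card = n} := by
  have hsum : span ℝ (bergmanCone Fm + bergmanCone Gm) =
      span ℝ (bergmanCone Fm) ⊔ span ℝ (bergmanCone Gm) :=
    span_add_of_zero_mem zero_mem_bergmanCone zero_mem_bergmanCone
  refine ⟨?_, ?_⟩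
  · rw [hsum, span_bergmanCone fun e => (hFm e).1, span_bergmanCone fun e => (hGm e).1,
      span_union]
  · have hcols : span ℝ (range (Matrix.of (incidenceRow ℝ Fm Gm)).col) =
        span ℝ (bergmanCone Fm + bergmanCone Gm) := by
      rw [col_of_incidenceRow, Sum.elim_range, span_union, span_range_incidenceCol,
        span_range_incidenceCol, hsum]
    rw [← hcols, ← Matrix.rank_eq_finrank_span_cols, Matrix.rank_eq_finrank_span_row]
    exact finrank_span_range_incidenceRow

/-- the linear span of the Minkowski sum `K_𝓕 + K_𝓖` equals the column
span of the vertex–edge incidence matrix of the bipartite multigraph `H^E_{𝓕,𝓖}`;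
in particular its dimension equals the rank of the graphic matroid of `H^E_{𝓕,𝓖}`
(the largest cardinality of a cycle-free edge subset). -/
theorem span_bergman_sum_eq_incidence_span {E : Type*} [Fintype E]
    (M N : Matroid E) (hME : M.E = Set.univ) (hNE : N.E = Set.univ)
    (𝓕 𝓖 : Finset (Set E))
    (h𝓕 : ∀ F ∈ 𝓕, M.IsFlat F ∧ F.Nonempty) (h𝓕chain : IsChain (· ⊆ ·) (↑𝓕 : Set (Set E)))
    (h𝓖 : ∀ G ∈ 𝓖, N.IsFlat G ∧ G.Nonempty) (h𝓖chain : IsChain (· ⊆ ·) (↑𝓖 : Set (Set E)))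
    (h𝓕top : Set.univ ∈ 𝓕) (h𝓖top : Set.univ ∈ 𝓖)
    (Fm Gm : E → Set E)
    (hFm : ∀ e : E, Fm e ∈ 𝓕 ∧ e ∈ Fm e ∧ ∀ F ∈ 𝓕, e ∈ F → Fm e ⊆ F)
    (hGm : ∀ e : E, Gm e ∈ 𝓖 ∧ e ∈ Gm e ∧ ∀ G ∈ 𝓖, e ∈ G → Gm e ⊆ G) :
    Submodule.span ℝ (bergmanCone Fm + bergmanCone Gm) =
      Submodule.span ℝ (incidenceCol Fm '' ↑𝓕 ∪ incidenceCol Gm '' ↑𝓖) ∧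
    Module.finrank ℝ (Submodule.span ℝ (bergmanCone Fm + bergmanCone Gm)) =
      sSup {n | ∃ I : Finset E,
        (∀ J ⊆ I, J.Nonempty → J.card < (J.image Fm).card + (J.image Gm).card) ∧
        I.card = n} :=
  span_bergman_sum_eq_incidence_span_general 𝓕 𝓖 Fm Gm hFm hGm
end

section
/- Let (G, φ) be a gain graph over the group ℝ² ⋊ SO(2), and define the matrix M(G,φ) ∈ ℂ^{A(G) × V(G)} by: for a non-loop arc e, the entry at (e, source(e)) is 1 and at (e, target(e)) is −t(π₂(φ(e))); for a loop e at v, the entry at (e, v) is 1 − t(π₂(φ(e))); all other entries are 0, where t : SO(2) → ℂ sends a rotation by angle θ to e^{iθ} and π₂ is the projection to SO(2). Then for a balanced cycle S of (G, π₂∘φ) traversed as a closed walk W = e₁,...,e_k, the linear form g_W(z) = Σᵢ aᵢ z_{eᵢ}, with aᵢ = t(π₂(φ(e₁)⋯φ(e_{i−1}))) if eᵢ is traversed forwards and aᵢ = −t(π₂(φ(eᵢ)⁻¹φ(e₁)⋯φ(e_{i−1}))) otherwise, vanishes identically on the column span of M(G,φ). -/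
section GainGraph

variable {V A : Type*}

/-- The starting vertex of a step `(e, d)`. -/
def stepStart (src tgt : A → V) (s : A × Bool) : V := if s.2 then src s.1 else tgt s.1

/-- The ending vertex of a step. -/
def stepEnd (src tgt : A → V) (s : A × Bool) : V := if s.2 then tgt s.1 else src s.1

/-- `IsWalk src tgt u v w`: `w` is a walk from `u` to `v`. -/
def IsWalk (src tgt : A → V) : V → V → List (A × Bool) → Prop
  | u, v, [] => u = v
  | u, v, s :: w => stepStart src tgt s = u ∧ IsWalk src tgt (stepEnd src tgt s) v w

/-- The rotation (`SO(2)`-) gain of a walk, recorded as a unit complex number via the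
isomorphism `t : SO(2) ≃ 𝕋`; here `ρ e = t(π₂(φ e))`. -/
noncomputable def rotGain (ρ : A → ℂ) (w : List (A × Bool)) : ℂ :=
  (w.map fun s => if s.2 then ρ s.1 else (ρ s.1)⁻¹).prod

/-- The row of the matrix `M(G, φ)` indexed by the arc `e`: for a non-loop arc the
entry at `src e` is `1` and at `tgt e` is `-t(π₂(φ e))`; for a loop at `v` the entry
at `v` is `1 - t(π₂(φ e))`; all other entries vanish. -/
noncomputable def Mrow [DecidableEq V] (src tgt : A → V) (ρ : A → ℂ) (e : A) (v : V) : ℂ :=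
  if src e = tgt e then (if v = src e then 1 - ρ e else 0)
  else if v = src e then 1 else if v = tgt e then - ρ e else 0

/-- The value of the linear form `g_W` at `z`, accumulated with prefix rotation gain
`p = t(π₂(φ(e₁)⋯φ(e_{i-1})))`: a forward step contributes `p · z_e`, a backward step
contributes `-t(π₂(φ(e)⁻¹ φ(e₁)⋯φ(e_{i-1}))) · z_e = -(ρ e)⁻¹ p · z_e`. -/
noncomputable def walkForm (ρ : A → ℂ) (z : A → ℂ) : ℂ → List (A × Bool) → ℂ
  | _, [] => 0
  | p, (e, d) :: w =>
      (if d then p else -((ρ e)⁻¹ * p)) * z e +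
        walkForm ρ z (p * (if d then ρ e else (ρ e)⁻¹)) w

end GainGraph


/-! Row `e` of `M(G, φ)` applied to `x` is the twisted coboundary `x(src e) - ρ e · x(tgt e)`.
Along a walk from `u` to `w` the terms of `g_W` telescope, leaving `x u - gain(W) · x w`,
which vanishes on a balanced closed walk. -/

lemma sum_Mrow_mul {V A : Type*} [Fintype V] [DecidableEq V]
    (src tgt : A → V) (ρ : A → ℂ) (x : V → ℂ) (e : A) :
    ∑ u, Mrow src tgt ρ e u * x u = x (src e) - ρ e * x (tgt e) := by
  by_cases hloop : src e = tgt e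
  · simp [Mrow, hloop, ite_mul, sub_mul]
  · simp [Mrow, hloop, Ne.symm hloop, ite_mul, Finset.sum_ite, Finset.filter_ne',
      Finset.filter_eq', sub_eq_add_neg]

lemma walkForm_eq_of_isWalk {V A : Type*} (src tgt : A → V) (ρ : A → ℂ)
    (hρ : ∀ e, ρ e ≠ 0) (x : V → ℂ) {W : List (A × Bool)} {u w : V}
    (hW : IsWalk src tgt u w W) (p : ℂ) :
    walkForm ρ (fun e => x (src e) - ρ e * x (tgt e)) p W
      = p * x u - p * rotGain ρ W * x w := by
  induction W generalizing u p with
  | nil => simp [walkForm, rotGain, show u = w from hW]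
  | cons s W ih =>
    obtain ⟨e, d⟩ := s
    obtain ⟨rfl, hrest⟩ := hW
    have hgain : rotGain ρ ((e, d) :: W) = (if d then ρ e else (ρ e)⁻¹) * rotGain ρ W := by
      simp [rotGain]
    rw [walkForm, ih hrest, hgain]
    cases d
    · simp only [stepStart, stepEnd, Bool.false_eq_true, if_false]
      field_simp [hρ e]
      ring
    · simp only [stepStart, stepEnd, if_true]
      ring

/-- for a gain graph over `ℝ² ⋊ SO(2)` with rotation gains `ρ e =
t(π₂(φ e))` (unit complex numbers), the linear form `g_W` associated to a balanced
closed walk `W` of `(G, π₂ ∘ φ)` (rotation gain `1`) vanishes identically on the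
column span of `M(G, φ)`, i.e. on all vectors `z = M(G, φ) x`. -/
theorem balanced_cycle_form_vanishes {V A : Type*} [Fintype V] [DecidableEq V]
    (src tgt : A → V) (ρ : A → ℂ) (hρ : ∀ e, ‖ρ e‖ = 1)
    (v : V) (W : List (A × Bool))
    (hW : IsWalk src tgt v v W) (hbal : rotGain ρ W = 1) :
    ∀ x : V → ℂ,
      walkForm ρ (fun e => ∑ u : V, Mrow src tgt ρ e u * x u) 1 W = 0 := by
  intro x
  have hρ₀ : ∀ e, ρ e ≠ 0 := fun e h => by simpa [h] using hρ e
  simp only [sum_Mrow_mul]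
  rw [walkForm_eq_of_isWalk src tgt ρ hρ₀ x hW, hbal]
  ring
end
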